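/- arXiv:1508.03438 — 2 statements merged into one kernel-verified Lean document; each statement's English description precedes it below -/
import Mathlib

section
/- Fix a real t₁ < 0 and a complex number z = z₁ + i z₂ with z ≠ −i√(−t₁). Then the one-sided derivative from the lower half-plane at t₂ = 0 of the function t₂ ↦ log|√(t₁ + i t₂) − z| exists and equals z₁ / ( 2 √(−t₁) ( z₁² + (√(−t₁) + z₂)² ) ). -/
/-!
On the closed lower half-plane the branch `zsqrt` coincides with `w ↦ -i (-w)^{1/2}`, and this
function is holomorphic across the negative real axis, since there `-w` lies in the slit plane of
the principal power. So the one-sided derivative is an honest derivative: with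
`g(h) = -i (-(t₁ + i h))^{1/2}` one has `g(0) = -i √(-t₁)` and `g'(0) = -1 / (2 √(-t₁))`, and the
derivative of `log ‖g - z‖` is `⟪g - z, g'⟫ / ‖g - z‖²`.
-/

open Complex Real

open scoped InnerProductSpace

/-- The branch angle in [-π, π): equals `Complex.arg` except that angle π is mapped to -π. -/
noncomputable def branchAngle (w : ℂ) : ℝ :=
  if Complex.arg w = Real.pi then -Real.pi else Complex.arg w

/-- Square root branch √w = √ρ e^{iθ/2} with θ ∈ [-π, π), and √0 = 0. -/
noncomputable def zsqrt (w : ℂ) : ℂ :=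
  (Real.sqrt (‖w‖) : ℂ) * Complex.exp (Complex.I * (branchAngle w / 2))

noncomputable def lowerSqrt (w : ℂ) : ℂ := -I * (-w) ^ (2⁻¹ : ℂ)

lemma branchAngle_eq_arg_neg_sub_pi {w : ℂ} (hw : w.im ≤ 0) (hw0 : w ≠ 0) :
    branchAngle w = arg (-w) - π := by
  unfold branchAngle
  split_ifs with hπ
  · rw [arg_neg_eq_arg_sub_pi_iff.2 (.inr (arg_eq_pi_iff.1 hπ).symm), hπ]
    ring
  · have : w.im < 0 ∨ w.im = 0 ∧ 0 < w.re := by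
      rcases hw.lt_or_eq with him | him
      · exact .inl him
      · refine .inr ⟨him, lt_of_le_of_ne ?_ fun hre => hw0 (Complex.ext hre.symm him)⟩
        exact not_lt.1 fun hre => hπ (arg_eq_pi_iff.2 ⟨hre, him⟩)
    rw [arg_neg_eq_arg_add_pi_iff.2 this]
    ring

lemma zsqrt_eq_lowerSqrt {w : ℂ} (hw : w.im ≤ 0) : zsqrt w = lowerSqrt w := by
  rcases eq_or_ne w 0 with rfl | hw0
  · simp [zsqrt, lowerSqrt]
  have hρ : 0 < ‖w‖ := norm_pos_iff.2 hw0
  rw [zsqrt, lowerSqrt, branchAngle_eq_arg_neg_sub_pi hw hw0,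
    cpow_def_of_ne_zero (neg_ne_zero.2 hw0), Complex.log, norm_neg, Real.sqrt_eq_rpow,
    Real.rpow_def_of_pos hρ]
  push_cast
  rw [show I * ((arg (-w) - π) / 2) = I * (arg (-w) / 2) + -(π / 2 * I) by ring,
    show (Real.log ‖w‖ + arg (-w) * I) * 2⁻¹ = Real.log ‖w‖ * (1 / 2) + I * (arg (-w) / 2) by
      ring,
    Complex.exp_add, Complex.exp_add, Complex.exp_neg, exp_pi_div_two_mul_I, inv_I]
  ring

lemma Complex.ofReal_cpow_inv_two {x : ℝ} (hx : 0 ≤ x) : (x : ℂ) ^ (2⁻¹ : ℂ) = √x := by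
  rw [Real.sqrt_eq_rpow, ofReal_cpow hx]
  norm_num

lemma lowerSqrt_ofReal {x : ℝ} (hx : x ≤ 0) : lowerSqrt x = -I * √(-x) := by
  rw [lowerSqrt, ← ofReal_neg, ofReal_cpow_inv_two (neg_nonneg.2 hx)]

lemma hasDerivAt_lowerSqrt {x : ℝ} (hx : x < 0) :
    HasDerivAt lowerSqrt (I / (2 * √(-x))) x := by
  have hmem : -(x : ℂ) ∈ slitPlane := by
    rw [← ofReal_neg]
    exact ofReal_mem_slitPlane.2 (neg_pos.2 hx)
  have hsq : ((-x : ℝ) : ℂ) = (√(-x) : ℂ) ^ 2 := by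
    rw [← ofReal_pow, Real.sq_sqrt (neg_nonneg.2 hx.le)]
  refine (((hasDerivAt_neg (x : ℂ)).cpow_const (c := 2⁻¹) hmem).const_mul (-I)).congr_deriv ?_
  rw [cpow_sub _ _ (neg_ne_zero.2 (ofReal_ne_zero.2 hx.ne)), cpow_one, ← ofReal_neg,
    ofReal_cpow_inv_two (neg_nonneg.2 hx.le), hsq]
  field_simp

lemma hasDerivAt_lowerSqrt_ofReal_add_I_mul {x : ℝ} (hx : x < 0) :
    HasDerivAt (fun h : ℝ => lowerSqrt (x + I * h)) (-(2 * √(-x))⁻¹ : ℝ) 0 := by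
  have hline : HasDerivAt (fun h : ℝ => (x : ℂ) + I * h) I 0 := by
    simpa using ((hasDerivAt_id (0 : ℝ)).ofReal_comp.const_mul I).const_add (x : ℂ)
  refine ((hasDerivAt_lowerSqrt hx).comp_of_eq 0 hline (by simp)).congr_deriv ?_
  push_cast
  field_simp
  rw [I_sq]
  ring

lemma HasDerivAt.log_norm {E : Type*} [NormedAddCommGroup E] [InnerProductSpace ℝ E]
    {f : ℝ → E} {f' : E} {x : ℝ} (hf : HasDerivAt f f' x) (hx : f x ≠ 0) :
    HasDerivAt (fun t => Real.log ‖f t‖) (⟪f x, f'⟫_ℝ / ‖f x‖ ^ 2) x := by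
  have h := (hf.norm_sq.log (by positivity)).div_const 2
  have hlog : (fun t => Real.log (‖f t‖ ^ 2) / 2) = fun t => Real.log ‖f t‖ := by
    ext t
    rw [Real.log_pow]
    push_cast
    ring
  rw [hlog] at h
  exact h.congr_deriv (by ring)

/-- For real t₁ < 0 and complex z ≠ -i√(-t₁), the one-sided derivative from
the lower half-plane at t₂ = 0 of t₂ ↦ log|√(t₁ + i t₂) − z| exists and equals
z₁ / (2 √(-t₁) (z₁² + (√(-t₁) + z₂)²)). -/
theorem log_sqrt_normal_derivative_negative_axis (t₁ : ℝ) (ht : t₁ < 0) (z : ℂ)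
    (hz : z ≠ -Complex.I * (Real.sqrt (-t₁) : ℂ)) :
    Filter.Tendsto
      (fun h : ℝ =>
        (Real.log (‖zsqrt ((t₁ : ℂ) + Complex.I * h) - z‖) -
          Real.log (‖zsqrt (t₁ : ℂ) - z‖)) / h)
      (nhdsWithin 0 (Set.Iio 0))
      (nhds (z.re / (2 * Real.sqrt (-t₁) * (z.re ^ 2 + (Real.sqrt (-t₁) + z.im) ^ 2)))) := by
  set s := √(-t₁)
  have hzsqrt (h : ℝ) (hh : h ≤ 0) : zsqrt (t₁ + I * h) = lowerSqrt (t₁ + I * h) :=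
    zsqrt_eq_lowerSqrt (by simpa using hh)
  have hval : lowerSqrt (t₁ + I * (0 : ℝ)) = -I * s := by simpa using lowerSqrt_ofReal ht.le
  have hzsqrt₀ : zsqrt t₁ = -I * s := by simpa [lowerSqrt_ofReal ht.le] using hzsqrt 0 le_rfl
  have hderiv := ((hasDerivAt_lowerSqrt_ofReal_add_I_mul ht).sub_const z).log_norm
    (by rw [hval]; exact sub_ne_zero.2 hz.symm)
  rw [hval] at hderiv
  have hL : ⟪-I * s - z, ((-(2 * s)⁻¹ : ℝ) : ℂ)⟫_ℝ / ‖-I * s - z‖ ^ 2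
      = z.re / (2 * s * (z.re ^ 2 + (s + z.im) ^ 2)) := by
    have hre : (-I * s - z).re = -z.re := by simp
    have him : (-I * s - z).im = -s - z.im := by simp
    rw [Complex.inner, re_ofReal_mul, conj_re, ← normSq_eq_norm_sq, normSq_apply, hre, him]
    field_simp
    ring
  rw [hL] at hderiv
  have hwithin : HasDerivWithinAt (fun h : ℝ => Real.log ‖zsqrt (t₁ + I * h) - z‖) _
      (Set.Iio 0) 0 :=
    hderiv.hasDerivWithinAt.congr (fun h hh => by rw [hzsqrt h hh.le]) (by rw [hzsqrt 0 le_rfl])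
  convert (hasDerivWithinAt_iff_tendsto_slope' (by simp)).1 hwithin using 2 with h
  simp [slope_def_field, hzsqrt₀]
end

section
/- Let H(t,ξ) be the Zaremba Green function of the lower half-plane and let A > 0. Then there is a constant C (indeed C = 1 suffices) such that ∫₀^A |∂H/∂t₂ (t, ξ)| dt ≤ C for every complex number ξ, where ∂H/∂t₂ denotes the one-sided normal derivative from the lower half-plane at real t ∈ (0,A) and the (Lebesgue) integral ignores the at most one point t = ξ where the integrand is undefined. -/
open Complex Real

/-- The Zaremba Green function of the lower half-plane. -/
noncomputable def ZH (t ξ : ℂ) : ℝ :=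
  -(1 / (2 * Real.pi)) *
    (Real.log (‖t - ξ‖) + Real.log (‖t - (starRingEnd ℂ) ξ‖)
      - 2 * Real.log (‖zsqrt t + zsqrt ξ‖)
      - 2 * Real.log (‖zsqrt t - zsqrt ((starRingEnd ℂ) ξ)‖))

/-- One-sided normal derivative of H from the lower half-plane at a real point t. -/
noncomputable def ZHn (t : ℝ) (ξ : ℂ) : ℝ :=
  derivWithin (fun h : ℝ => ZH ((t : ℂ) + Complex.I * h) ξ) (Set.Iio 0) 0

/-! Near the positive real axis `zsqrt` is holomorphic, so `ZH` is `-1/(2π)` times the real part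
of a holomorphic potential and its normal derivative at `t > 0` is read off from the complex
derivative. Writing `zsqrt ξ = a + ib`, it equals
`b / (2π√t) · (1 / ((√t + a)² + b²) + 1 / ((√t - a)² + b²))`, whose absolute value is the
derivative of `(arctan ((√t + a)/|b|) + arctan ((√t - a)/|b|)) / π`: this vanishes at `0` and
stays below `1`. For real `ξ`, the factorisation `z - ξ = (√z + √ξ)(√z - √ξ)` makes `ZH`
vanish away from `ξ`. -/

open ComplexConjugate

lemma zsqrt_eq_cexp_log {z : ℂ} (hz : z ∈ slitPlane) : zsqrt z = cexp (Complex.log z / 2) := by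
  have hnorm : 0 < ‖z‖ := norm_pos_iff.mpr (slitPlane_ne_zero hz)
  rw [zsqrt, branchAngle, if_neg (slitPlane_arg_ne_pi hz), Complex.log, add_div, Complex.exp_add]
  congr 1
  · rw [← ofReal_ofNat, ← ofReal_div, ← ofReal_exp, Real.exp_half, Real.exp_log hnorm]
  · ring_nf

lemma zsqrt_ofReal {t : ℝ} (ht : 0 ≤ t) : zsqrt t = √t := by
  simp [zsqrt, branchAngle, arg_ofReal_of_nonneg ht, Real.pi_ne_zero.symm, abs_of_nonneg ht]

lemma zsqrt_conj {ξ : ℂ} (hξ : arg ξ ≠ π) : zsqrt (conj ξ) = conj (zsqrt ξ) := by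
  have hneg : -arg ξ ≠ π := by linarith [neg_pi_lt_arg ξ]
  rw [zsqrt, zsqrt, branchAngle, branchAngle, arg_conj, if_neg hξ, if_neg hneg, if_neg hξ,
    map_mul, norm_conj, conj_ofReal, ← exp_conj]
  simp only [map_mul, conj_I, map_div₀, conj_ofReal, map_ofNat, ofReal_neg]
  ring_nf

lemma zsqrt_sq (z : ℂ) : zsqrt z ^ 2 = z := by
  have hexp : cexp (I * branchAngle z) = cexp (arg z * I) := by
    rw [branchAngle]
    split_ifs with hπ
    · rw [hπ, ofReal_neg, mul_neg, mul_comm, Complex.exp_neg, exp_pi_mul_I]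
      norm_num
    · rw [mul_comm]
  calc zsqrt z ^ 2 = ‖z‖ * cexp (I * branchAngle z) := by
        rw [zsqrt, mul_pow, ← Complex.exp_nat_mul, ← ofReal_pow, Real.sq_sqrt (norm_nonneg z)]
        push_cast
        ring_nf
    _ = z := by rw [hexp, norm_mul_exp_arg_mul_I]

lemma im_zsqrt_ne_zero {ξ : ℂ} (hξ : ξ.im ≠ 0) : (zsqrt ξ).im ≠ 0 := by
  intro hb
  apply hξ
  rw [← zsqrt_sq ξ, sq, mul_im, hb, mul_zero, zero_mul, add_zero]

lemma ZH_eq_zero_of_im_eq_zero {ξ z : ℂ} (hξ : ξ.im = 0) (hne : z ≠ ξ) : ZH z ξ = 0 := by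
  have hfactor : z - ξ = (zsqrt z + zsqrt ξ) * (zsqrt z - zsqrt ξ) := by
    linear_combination (zsqrt_sq z).symm + zsqrt_sq ξ
  have hprod : (zsqrt z + zsqrt ξ) * (zsqrt z - zsqrt ξ) ≠ 0 := hfactor ▸ sub_ne_zero.mpr hne
  rw [ZH, conj_eq_iff_im.mpr hξ, hfactor, norm_mul,
    Real.log_mul (norm_ne_zero_iff.mpr (left_ne_zero_of_mul hprod))
      (norm_ne_zero_iff.mpr (right_ne_zero_of_mul hprod))]
  ring

lemma ZHn_eq_zero_of_im_eq_zero {ξ : ℂ} (hξ : ξ.im = 0) {t : ℝ} (ht : t ≠ ξ.re) :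
    ZHn t ξ = 0 := by
  have hZH : (fun h : ℝ => ZH (t + I * h) ξ) = fun _ => 0 := by
    funext h
    refine ZH_eq_zero_of_im_eq_zero hξ fun heq => ht ?_
    simpa using congrArg re heq
  rw [ZHn, hZH, derivWithin_fun_const, Pi.zero_apply]

lemma mem_slitPlane_of_im_ne_zero {z : ℂ} (hz : z.im ≠ 0) : z ∈ slitPlane :=
  mem_slitPlane_iff.mpr (Or.inr hz)

lemma im_inv_add_inv_conj (w : ℂ) : (w⁻¹ + (conj w)⁻¹).im = 0 := by
  rw [← map_inv₀, add_conj, ofReal_im]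

lemma HasDerivAt.hasDerivAt_re_comp_add_I_mul {f : ℂ → ℂ} {f' z : ℂ} (hf : HasDerivAt f f' z) :
    HasDerivAt (fun h : ℝ => (f (z + I * h)).re) (-f'.im) 0 := by
  have hline : HasDerivAt (fun w : ℂ => z + I * w) I (0 : ℝ) := by
    simpa using ((hasDerivAt_id (0 : ℂ)).const_mul I).const_add z
  simpa using (hf.comp_of_eq ((0 : ℝ) : ℂ) hline (by simp)).real_of_complex

noncomputable def zarembaPotential (ξ z : ℂ) : ℂ :=
  Complex.log (z - ξ) + Complex.log (z - conj ξ)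
    - 2 * Complex.log (cexp (Complex.log z / 2) + zsqrt ξ)
    - 2 * Complex.log (cexp (Complex.log z / 2) - conj (zsqrt ξ))

lemma ZH_eq_re_zarembaPotential {ξ z : ℂ} (hξ : arg ξ ≠ π) (hz : z ∈ slitPlane) :
    ZH z ξ = -(1 / (2 * π)) * (zarembaPotential ξ z).re := by
  rw [ZH, zarembaPotential, zsqrt_eq_cexp_log hz, zsqrt_conj hξ]
  simp [log_re]

lemma cexp_log_ofReal_div_two {t : ℝ} (ht : 0 < t) : cexp (Complex.log t / 2) = √t :=
  (zsqrt_eq_cexp_log (ofReal_mem_slitPlane.mpr ht)).symm.trans (zsqrt_ofReal ht.le)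

lemma hasDerivAt_cexp_log_div_two {t : ℝ} (ht : 0 < t) :
    HasDerivAt (fun z => cexp (Complex.log z / 2)) (2 * (√t : ℂ))⁻¹ t := by
  have hsq : (t : ℂ) = (√t : ℂ) ^ 2 := by rw [← ofReal_pow, Real.sq_sqrt ht.le]
  refine ((hasDerivAt_log (ofReal_mem_slitPlane.mpr ht)).div_const 2).cexp.congr_deriv ?_
  rw [cexp_log_ofReal_div_two ht, hsq]
  field_simp

lemma hasDerivAt_zarembaPotential {ξ : ℂ} (hξ : ξ.im ≠ 0) {t : ℝ} (ht : 0 < t) :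
    HasDerivAt (zarembaPotential ξ)
      ((t - ξ)⁻¹ + (t - conj ξ)⁻¹
        - (√t : ℂ)⁻¹ * ((√t + zsqrt ξ)⁻¹ + (√t - conj (zsqrt ξ))⁻¹)) t := by
  have hb := im_zsqrt_ne_zero hξ
  have hval := cexp_log_ofReal_div_two ht
  have hW := hasDerivAt_cexp_log_div_two ht
  have h₁ := ((hasDerivAt_id (t : ℂ)).sub_const ξ).clog
    (mem_slitPlane_of_im_ne_zero (by simpa using hξ))
  have h₂ := ((hasDerivAt_id (t : ℂ)).sub_const (conj ξ)).clog
    (mem_slitPlane_of_im_ne_zero (by simpa using hξ))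
  have h₃ := (hW.add_const (zsqrt ξ)).clog
    (mem_slitPlane_of_im_ne_zero (by simpa [hval] using hb))
  have h₄ := (hW.sub_const (conj (zsqrt ξ))).clog
    (mem_slitPlane_of_im_ne_zero (by simpa [hval] using hb))
  refine (((h₁.add h₂).sub (h₃.const_mul 2)).sub (h₄.const_mul 2)).congr_deriv ?_
  have hsqrt : (√t : ℂ) ≠ 0 := ofReal_ne_zero.mpr (Real.sqrt_pos.mpr ht).ne'
  simp only [hval, id]
  field_simp
  ring

noncomputable def zarembaKernel (a b t : ℝ) : ℝ :=
  b / (2 * π * √t) * (1 / ((√t + a) ^ 2 + b ^ 2) + 1 / ((√t - a) ^ 2 + b ^ 2))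

lemma ZHn_eq_zarembaKernel {ξ : ℂ} (hξ : ξ.im ≠ 0) {t : ℝ} (ht : 0 < t) :
    ZHn t ξ = zarembaKernel (zsqrt ξ).re (zsqrt ξ).im t := by
  have harg : arg ξ ≠ π := fun h => hξ (arg_eq_pi_iff.mp h).2
  have hZH : (fun h : ℝ => ZH (t + I * h) ξ)
      = fun h : ℝ => -(1 / (2 * π)) * (zarembaPotential ξ (t + I * h)).re :=
    funext fun h => ZH_eq_re_zarembaPotential harg (mem_slitPlane_iff.mpr (Or.inl (by simpa)))
  have hderiv := ((hasDerivAt_zarembaPotential hξ ht).hasDerivAt_re_comp_add_I_mul).const_mul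
    (-(1 / (2 * π)))
  rw [ZHn, hZH, hderiv.hasDerivWithinAt.derivWithin (uniqueDiffWithinAt_Iio 0)]
  have hconj : (t : ℂ) - conj ξ = conj ((t : ℂ) - ξ) := by simp
  rw [hconj, sub_im, im_inv_add_inv_conj, ← ofReal_inv, im_ofReal_mul, add_im, inv_im, inv_im]
  simp only [normSq_apply, add_re, add_im, sub_re, sub_im, ofReal_re, ofReal_im, conj_re, conj_im,
    zero_add, zero_sub, neg_neg]
  simp only [zarembaKernel, sq]
  field_simp
  ring

lemma zarembaKernel_nonneg (a : ℝ) {b : ℝ} (hb : 0 ≤ b) (t : ℝ) : 0 ≤ zarembaKernel a b t := by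
  unfold zarembaKernel
  positivity

lemma abs_zarembaKernel (a b t : ℝ) : |zarembaKernel a b t| = zarembaKernel a |b| t := by
  have hD : 0 ≤ 1 / ((√t + a) ^ 2 + b ^ 2) + 1 / ((√t - a) ^ 2 + b ^ 2) := by positivity
  rw [zarembaKernel, zarembaKernel, sq_abs, abs_mul, abs_div, abs_of_nonneg hD,
    abs_of_nonneg (by positivity : 0 ≤ 2 * π * √t)]

noncomputable def zarembaKernelPrimitive (a b t : ℝ) : ℝ :=
  (Real.arctan ((√t + a) / b) + Real.arctan ((√t - a) / b)) / π

lemma zarembaKernelPrimitive_zero (a b : ℝ) : zarembaKernelPrimitive a b 0 = 0 := by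
  simp [zarembaKernelPrimitive, neg_div, Real.arctan_neg]

lemma zarembaKernelPrimitive_lt_one (a b t : ℝ) : zarembaKernelPrimitive a b t < 1 := by
  rw [zarembaKernelPrimitive, div_lt_one pi_pos]
  linarith [Real.arctan_lt_pi_div_two ((√t + a) / b), Real.arctan_lt_pi_div_two ((√t - a) / b)]

lemma continuous_zarembaKernelPrimitive (a b : ℝ) : Continuous (zarembaKernelPrimitive a b) := by
  unfold zarembaKernelPrimitive
  fun_prop

lemma hasDerivAt_zarembaKernelPrimitive (a : ℝ) {b t : ℝ} (hb : b ≠ 0) (ht : 0 < t) :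
    HasDerivAt (zarembaKernelPrimitive a b) (zarembaKernel a b t) t := by
  have hsqrt := Real.hasDerivAt_sqrt ht.ne'
  have h₁ := ((hsqrt.add_const a).div_const b).arctan
  have h₂ := ((hsqrt.sub_const a).div_const b).arctan
  refine ((h₁.add h₂).div_const π).congr_deriv ?_
  rw [zarembaKernel]
  field_simp
  ring

lemma integral_zarembaKernel (a : ℝ) {b A : ℝ} (hb : 0 < b) (hA : 0 ≤ A) :
    ∫ t in 0..A, zarembaKernel a b t = zarembaKernelPrimitive a b A := by
  have hcont := (continuous_zarembaKernelPrimitive a b).continuousOn (s := Set.Icc 0 A)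
  have hderiv : ∀ t ∈ Set.Ioo 0 A,
      HasDerivAt (zarembaKernelPrimitive a b) (zarembaKernel a b t) t :=
    fun t ht => hasDerivAt_zarembaKernelPrimitive a hb.ne' ht.1
  have hint := intervalIntegral.integrableOn_deriv_of_nonneg hcont hderiv
    fun t _ => zarembaKernel_nonneg a hb.le t
  rw [intervalIntegral.integral_eq_sub_of_hasDerivAt_of_le hA hcont hderiv
    ((intervalIntegrable_iff_integrableOn_Ioc_of_le hA).mpr hint),
    zarembaKernelPrimitive_zero, sub_zero]

/-- For A > 0 there is a constant C (indeed C = 1 suffices) such that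
∫₀^A |∂H/∂t₂(t,ξ)| dt ≤ C for every complex ξ. -/
theorem zaremba_green_normal_derivative_integral_bound (A : ℝ) (hA : 0 < A) :
    ∃ C : ℝ, C = 1 ∧ ∀ ξ : ℂ, (∫ t in (0:ℝ)..A, |ZHn t ξ|) ≤ C := by
  refine ⟨1, rfl, fun ξ => ?_⟩
  rcases eq_or_ne ξ.im 0 with hξ | hξ
  · have hzero : ∫ t in (0:ℝ)..A, |ZHn t ξ| = 0 :=
      intervalIntegral.integral_zero_ae <|
        ((Set.countable_singleton ξ.re).ae_notMem MeasureTheory.volume).mono fun t ht _ => by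
          rw [ZHn_eq_zero_of_im_eq_zero hξ ht, abs_zero]
    exact hzero.trans_le zero_le_one
  · have hkernel : ∫ t in (0:ℝ)..A, |ZHn t ξ|
        = ∫ t in (0:ℝ)..A, zarembaKernel (zsqrt ξ).re |(zsqrt ξ).im| t :=
      intervalIntegral.integral_congr_ae <| Filter.Eventually.of_forall fun t ht => by
        rw [Set.uIoc_of_le hA.le] at ht
        rw [ZHn_eq_zarembaKernel hξ ht.1, abs_zarembaKernel]
    rw [hkernel, integral_zarembaKernel _ (abs_pos.mpr (im_zsqrt_ne_zero hξ)) hA.le]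
    exact (zarembaKernelPrimitive_lt_one _ _ _).le
end
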